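/- Let h₊ : ℝ → Matrix (Fin n) (Fin n) ℂ be a differentiable, 2π-periodic family of invertible matrices, let C be an invertible n×n complex matrix, and define the particle-hole partner h₋(k) = −C · (h₊(−k))ᵀ · C⁻¹. Then ∫₀^{2π} Tr[h₋(k)⁻¹ · (deriv h₋ k)] dk = −∫₀^{2π} Tr[h₊(k)⁻¹ · (deriv h₊ k)] dk; hence the 1D winding numbers satisfy w₁[h₋] = −w₁[h₊], so the total winding number w₁[h₊] + w₁[h₋] of the block Hamiltonian H = fromBlocks 0 h₊ h₋ 0 vanishes and no skin effect occurs (the situation of 1D class D with commuting sublattice symmetry, D + S₊). -/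

import Mathlib

/-! The integrand `Tr[h₋⁻¹ h₋']` at `k` equals `-Tr[h₊⁻¹ h₊']` at `-k`: the overall sign of `h₋`
cancels between `h₋⁻¹` and `h₋'`, the reflection `k ↦ -k` contributes a sign through the chain
rule, and the trace is blind to conjugation by `C` and to transposition (after cycling
`h₊⁻¹ᵀ h₊'ᵀ = (h₊' h₊⁻¹)ᵀ`). Reflecting the interval of integration costs nothing because the
integrand is `2π`-periodic. -/

open Matrix MeasureTheory intervalIntegral

/-- Entrywise derivative of a one-parameter family of matrices. -/
noncomputable def matDeriv {m : Type*} (h : ℝ → Matrix m m ℂ) (k : ℝ) : Matrix m m ℂ :=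
  Matrix.of fun i j => deriv (fun t => h t i j) k

/-- The 1D winding number `w₁[h] = (1/(2πi)) ∫₀^{2π} Tr[h(k)⁻¹ · h'(k)] dk` of a family of
invertible matrices, with `h'` the entrywise derivative. -/
noncomputable def w1 {m : Type*} [Fintype m] [DecidableEq m] (h : ℝ → Matrix m m ℂ) : ℂ :=
  (1 / (2 * Real.pi * Complex.I)) *
    ∫ k in (0 : ℝ)..(2 * Real.pi), ((h k)⁻¹ * matDeriv h k).trace

open Function

section Algebra

variable {m α : Type*} [Fintype m] [DecidableEq m] [CommRing α]

/-- Holds also for singular `A`, where both sides are the junk value `0`. -/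
theorem Matrix.inv_neg (A : Matrix m m α) : (-A)⁻¹ = -A⁻¹ := by
  by_cases hA : IsUnit A.det
  · exact inv_eq_left_inv (by rw [neg_mul_neg, nonsing_inv_mul _ hA])
  · have hnegA : ¬IsUnit (-A).det := by
      rwa [det_neg, IsUnit.mul_iff, and_iff_right ((isUnit_neg_one).pow _)]
    rw [nonsing_inv_apply_not_isUnit _ hA, nonsing_inv_apply_not_isUnit _ hnegA, neg_zero]

theorem Matrix.inv_conj_transpose {C : Matrix m m α} (hC : IsUnit C) (M : Matrix m m α) :
    (C * Mᵀ * C⁻¹)⁻¹ = C * M⁻¹ᵀ * C⁻¹ := by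
  rw [mul_inv_rev, mul_inv_rev, nonsing_inv_nonsing_inv _ ((isUnit_iff_isUnit_det C).mp hC),
    transpose_nonsing_inv, Matrix.mul_assoc]

theorem Matrix.trace_inv_neg_conj_transpose_mul {C : Matrix m m α} (hC : IsUnit C)
    (M D : Matrix m m α) :
    trace ((-(C * Mᵀ * C⁻¹))⁻¹ * (C * Dᵀ * C⁻¹)) = -trace (M⁻¹ * D) := by
  have hCinv : C⁻¹ * C = 1 := nonsing_inv_mul C ((isUnit_iff_isUnit_det C).mp hC)
  rw [Matrix.inv_neg, inv_conj_transpose hC, Matrix.neg_mul, trace_neg, neg_inj]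
  calc trace (C * M⁻¹ᵀ * C⁻¹ * (C * Dᵀ * C⁻¹))
      = trace (C * (D * M⁻¹)ᵀ * C⁻¹) := by
        rw [transpose_mul]
        simp only [Matrix.mul_assoc, ← Matrix.mul_assoc C⁻¹, hCinv, Matrix.one_mul]
    _ = trace (D * M⁻¹) := by rw [trace_mul_cycle, hCinv, Matrix.one_mul, trace_transpose]
    _ = trace (M⁻¹ * D) := trace_mul_comm _ _

end Algebra

section Derivative

variable {m : Type*}

theorem matDeriv_neg (h : ℝ → Matrix m m ℂ) : matDeriv (fun t => -h t) = -matDeriv h := by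
  funext k
  ext i j
  simp only [matDeriv, of_apply, Pi.neg_apply, Matrix.neg_apply, deriv.fun_neg]

theorem matDeriv_transpose (h : ℝ → Matrix m m ℂ) (k : ℝ) :
    matDeriv (fun t => (h t)ᵀ) k = (matDeriv h k)ᵀ :=
  rfl

theorem matDeriv_comp_neg (h : ℝ → Matrix m m ℂ) (k : ℝ) :
    matDeriv (fun t => h (-t)) k = -matDeriv h (-k) := by
  ext i j
  exact deriv_comp_neg (fun t => h t i j) k

theorem Function.Periodic.matDeriv {h : ℝ → Matrix m m ℂ} {T : ℝ} (hh : Periodic h T) :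
    Periodic (matDeriv h) T := by
  intro k
  ext i j
  simp only [_root_.matDeriv, of_apply]
  rw [← deriv_comp_add_const]
  congr 1
  funext t
  rw [hh t]

theorem matDeriv_const_mul_mul_const [Fintype m] (A B : Matrix m m ℂ) {h : ℝ → Matrix m m ℂ}
    {k : ℝ} (hd : ∀ i j, DifferentiableAt ℝ (fun t => h t i j) k) :
    matDeriv (fun t => A * h t * B) k = A * matDeriv h k * B := by
  ext i j
  simp only [matDeriv, of_apply, mul_apply]
  have hterm : ∀ x y, DifferentiableAt ℝ (fun t => A i y * h t y x) k :=
    fun x y => (hd y x).const_mul _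
  rw [deriv_fun_sum fun x _ => (DifferentiableAt.fun_sum fun y _ => hterm x y).mul_const _]
  refine Finset.sum_congr rfl fun x _ => ?_
  rw [deriv_mul_const (DifferentiableAt.fun_sum fun y _ => hterm x y),
    deriv_fun_sum fun y _ => hterm x y]
  simp only [deriv_const_mul _ (hd _ x)]

end Derivative

noncomputable def particleHolePartner {m : Type*} [Fintype m] [DecidableEq m]
    (C : Matrix m m ℂ) (h : ℝ → Matrix m m ℂ) (k : ℝ) : Matrix m m ℂ :=
  -(C * (h (-k))ᵀ * C⁻¹)

section ParticleHole

variable {m : Type*} [Fintype m] [DecidableEq m] {C : Matrix m m ℂ} {h : ℝ → Matrix m m ℂ}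
  {k : ℝ}

theorem matDeriv_particleHolePartner (hd : ∀ i j, DifferentiableAt ℝ (fun t => h t i j) (-k)) :
    matDeriv (particleHolePartner C h) k = C * (matDeriv h (-k))ᵀ * C⁻¹ := by
  have hd_neg : ∀ i j, DifferentiableAt ℝ (fun t => (h (-t))ᵀ i j) k :=
    fun i j => (hd j i).comp k differentiableAt_id.neg
  unfold particleHolePartner
  rw [matDeriv_neg (fun t => C * (h (-t))ᵀ * C⁻¹), Pi.neg_apply,
    matDeriv_const_mul_mul_const C C⁻¹ hd_neg, matDeriv_transpose, matDeriv_comp_neg,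
    transpose_neg, Matrix.mul_neg, Matrix.neg_mul, neg_neg]

theorem trace_inv_mul_matDeriv_particleHolePartner (hC : IsUnit C)
    (hd : ∀ i j, DifferentiableAt ℝ (fun t => h t i j) (-k)) :
    ((particleHolePartner C h k)⁻¹ * matDeriv (particleHolePartner C h) k).trace =
      -((h (-k))⁻¹ * matDeriv h (-k)).trace := by
  rw [matDeriv_particleHolePartner hd, particleHolePartner,
    trace_inv_neg_conj_transpose_mul hC]

end ParticleHole

theorem Function.Periodic.intervalIntegral_comp_neg {E : Type*} [NormedAddCommGroup E]
    [NormedSpace ℝ E] {g : ℝ → E} {T : ℝ} (hg : Periodic g T) :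
    ∫ x in (0 : ℝ)..T, g (-x) = ∫ x in (0 : ℝ)..T, g x := by
  rw [integral_comp_neg, neg_zero]
  simpa using hg.intervalIntegral_add_eq (-T) 0

theorem winding_number_particle_hole_partner_general
    {n : ℕ} (hp : ℝ → Matrix (Fin n) (Fin n) ℂ)
    (hdiff : ∀ i j, Differentiable ℝ fun k => hp k i j)
    (hper : ∀ k : ℝ, hp (k + 2 * Real.pi) = hp k)
    (C : Matrix (Fin n) (Fin n) ℂ) (hC : IsUnit C)
    (hm : ℝ → Matrix (Fin n) (Fin n) ℂ)
    (hrel : ∀ k : ℝ, hm k = -(C * (hp (-k))ᵀ * C⁻¹)) :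
    (∫ k in (0 : ℝ)..(2 * Real.pi), ((hm k)⁻¹ * matDeriv hm k).trace) =
      -(∫ k in (0 : ℝ)..(2 * Real.pi), ((hp k)⁻¹ * matDeriv hp k).trace) ∧
    w1 hm = -w1 hp ∧ w1 hp + w1 hm = 0 := by
  obtain rfl : hm = particleHolePartner C hp := funext hrel
  have hg : Periodic (fun k => ((hp k)⁻¹ * matDeriv hp k).trace) (2 * Real.pi) := fun k => by
    simp only [hper k, Periodic.matDeriv hper k]
  have hint : (∫ k in (0 : ℝ)..(2 * Real.pi),
      ((particleHolePartner C hp k)⁻¹ * matDeriv (particleHolePartner C hp) k).trace) =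
      -(∫ k in (0 : ℝ)..(2 * Real.pi), ((hp k)⁻¹ * matDeriv hp k).trace) := by
    simp only [trace_inv_mul_matDeriv_particleHolePartner hC fun i j => hdiff i j _,
      intervalIntegral.integral_neg, hg.intervalIntegral_comp_neg]
  have hw : w1 (particleHolePartner C hp) = -w1 hp := by
    rw [w1, w1, hint, mul_neg]
  exact ⟨hint, hw, by rw [hw, add_neg_cancel]⟩

/-- For a differentiable, 2π-periodic family of invertible matrices `h₊`, an
invertible matrix `C`, and the particle-hole partner `h₋(k) = −C · (h₊(−k))ᵀ · C⁻¹`, the trace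
integrals are opposite: `∫₀^{2π} Tr[h₋⁻¹ h₋'] = −∫₀^{2π} Tr[h₊⁻¹ h₊']`; hence
`w₁[h₋] = −w₁[h₊]` and the total winding number `w₁[h₊] + w₁[h₋]` vanishes (1D class D with
commuting sublattice symmetry, D + S₊): no skin effect occurs. -/
theorem winding_number_particle_hole_partner
    {n : ℕ} (hp : ℝ → Matrix (Fin n) (Fin n) ℂ)
    (hdiff : ∀ i j, Differentiable ℝ fun k => hp k i j)
    (hper : ∀ k : ℝ, hp (k + 2 * Real.pi) = hp k)
    (hunit : ∀ k, IsUnit (hp k))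
    (C : Matrix (Fin n) (Fin n) ℂ) (hC : IsUnit C)
    (hm : ℝ → Matrix (Fin n) (Fin n) ℂ)
    (hrel : ∀ k : ℝ, hm k = -(C * (hp (-k))ᵀ * C⁻¹)) :
    (∫ k in (0 : ℝ)..(2 * Real.pi), ((hm k)⁻¹ * matDeriv hm k).trace) =
      -(∫ k in (0 : ℝ)..(2 * Real.pi), ((hp k)⁻¹ * matDeriv hp k).trace) ∧
    w1 hm = -w1 hp ∧ w1 hp + w1 hm = 0 :=
  winding_number_particle_hole_partner_general hp hdiff hper C hC hm hrel
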